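/- arXiv:2306.00833 — 2 statements merged into one kernel-verified Lean document; each statement's English description precedes it below -/
import Mathlib

section
/- Let $1 \le q \le d-1$ and let $a_0 < a_1 < \cdots < a_d$ be positive reals (assortativity). Define $J_q^{td} = 2^{-d}\left(\sqrt{a_d + \sum_{k=1}^{d-q} 2^{k-1} a_{d-k}} - \sqrt{2^{d-q} a_{q-1}}\right)^2$ and $J_q^{bu} = 2^{-d}\left((\sqrt{a_{q-1}} - \sqrt{a_d})^2 + \sum_{k=1}^{d-q} 2^{k-1}(\sqrt{a_{q-1}} - \sqrt{a_{d-k}})^2\right)$. Then $J_q^{bu} > J_q^{td}$. -/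
/-!
Write `w = (1, 1, 2, …, 2^(m-1))` (with `m = d - q`, total weight `2^m`) for the weights of
`b = (a d, a (d-1), …, a q)` and `c = a (q-1)`. Expanding the squares, the bottom-up bracket is
`2^m c - 2 √c ∑ w √b + ∑ w b`, while the top-down bracket is the same expression with `∑ w √b`
replaced by `√(2^m ∑ w b)`. So the claim is the weighted Cauchy–Schwarz inequality
`(∑ w √b)² < (∑ w) (∑ w b)`, strict because `a (d-1) < a d`.
-/

open Finset Real

namespace Finset

variable {ι : Type*} {s : Finset ι}

lemma sum_mul_sub_sq {R : Type*} [CommRing R] (w y : ι → R) (c : R) :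
    ∑ i ∈ s, w i * (c - y i) ^ 2
      = c ^ 2 * ∑ i ∈ s, w i - 2 * c * ∑ i ∈ s, w i * y i + ∑ i ∈ s, w i * y i ^ 2 := by
  simp only [mul_sum, ← sum_sub_distrib, ← sum_add_distrib]
  exact sum_congr rfl fun _ _ => by ring

lemma sq_sum_mul_lt_sum_mul_sum_mul_sq {w y : ι → ℝ} (hw : ∀ i ∈ s, 0 < w i)
    {i j : ι} (hi : i ∈ s) (hj : j ∈ s) (hij : y i ≠ y j) :
    (∑ k ∈ s, w k * y k) ^ 2 < (∑ k ∈ s, w k) * ∑ k ∈ s, w k * y k ^ 2 := by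
  set W := ∑ k ∈ s, w k
  set T := ∑ k ∈ s, w k * y k
  have hW : 0 < W := sum_pos hw ⟨i, hi⟩
  set c := T / W
  have hcW : c * W = T := div_mul_cancel₀ T hW.ne'
  -- the weighted variance of `y` around its weighted mean `c` is positive
  have hvar : 0 < ∑ k ∈ s, w k * (c - y k) ^ 2 := by
    have hpos : ∀ k ∈ s, y k ≠ c → 0 < w k * (c - y k) ^ 2 := fun k hk hne =>
      mul_pos (hw k hk) (pow_two_pos_of_ne_zero (sub_ne_zero.mpr hne.symm))
    refine sum_pos' (fun k hk => mul_nonneg (hw k hk).le (sq_nonneg _)) ?_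
    by_cases hic : y i = c
    · exact ⟨j, hj, hpos j hj (hic ▸ hij.symm)⟩
    · exact ⟨i, hi, hpos i hi hic⟩
  rw [sum_mul_sub_sq] at hvar
  nlinarith [mul_pos hW hvar]

lemma sqrt_sum_mul_sub_sqrt_sq_lt_sum_mul_sqrt_sub_sq {w b : ι → ℝ} (hw : ∀ i ∈ s, 0 < w i)
    (hb : ∀ i ∈ s, 0 ≤ b i) {i j : ι} (hi : i ∈ s) (hj : j ∈ s) (hij : b i ≠ b j)
    {c : ℝ} (hc : 0 < c) :
    (√(∑ k ∈ s, w k * b k) - √((∑ k ∈ s, w k) * c)) ^ 2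
      < ∑ k ∈ s, w k * (√c - √(b k)) ^ 2 := by
  set W := ∑ k ∈ s, w k
  set S := ∑ k ∈ s, w k * b k
  set T := ∑ k ∈ s, w k * √(b k)
  have hS : S = ∑ k ∈ s, w k * √(b k) ^ 2 :=
    sum_congr rfl fun k hk => by rw [sq_sqrt (hb k hk)]
  have hCS : T < √(W * S) := by
    rw [lt_sqrt (sum_nonneg fun k hk => mul_nonneg (hw k hk).le (sqrt_nonneg _)), hS]
    exact sq_sum_mul_lt_sum_mul_sum_mul_sq hw hi hj
      (fun h => hij ((sqrt_inj (hb i hi) (hb j hj)).mp h))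
  have hW : 0 ≤ W := sum_nonneg fun k hk => (hw k hk).le
  have hS0 : 0 ≤ S := sum_nonneg fun k hk => mul_nonneg (hw k hk).le (hb k hk)
  have hcross : √S * √(W * c) = √c * √(W * S) := by
    rw [← sqrt_mul hS0, ← sqrt_mul hc.le]
    ring_nf
  have hexpand : (√S - √(W * c)) ^ 2 = c * W - 2 * √c * √(W * S) + S := by
    rw [sub_sq, mul_assoc, hcross, sq_sqrt hS0, sq_sqrt (mul_nonneg hW hc.le)]
    ring
  rw [hexpand, sum_mul_sub_sq, sq_sqrt hc.le, ← hS]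
  nlinarith [sqrt_pos.mpr hc]

end Finset

lemma one_add_sum_Icc_two_pow_pred (m : ℕ) : 1 + ∑ k ∈ Icc 1 m, (2 : ℝ) ^ (k - 1) = 2 ^ m := by
  induction m with
  | zero => simp
  | succ n ih =>
    rw [sum_Icc_succ_top (by omega), ← add_assoc, ih, Nat.add_sub_cancel]
    ring

theorem stmt1_general (d q : ℕ) (a : ℕ → ℝ)
    (hq : 1 ≤ q) (hqd : q ≤ d - 1)
    (hpos : ∀ k, k ≤ d → 0 < a k)
    (hmono : ∀ i j, i < j → j ≤ d → a i < a j) :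
    ((2 : ℝ) ^ d)⁻¹ *
        ((Real.sqrt (a (q - 1)) - Real.sqrt (a d)) ^ 2
          + ∑ k ∈ Finset.Icc 1 (d - q),
              (2 : ℝ) ^ (k - 1) * (Real.sqrt (a (q - 1)) - Real.sqrt (a (d - k))) ^ 2)
      > ((2 : ℝ) ^ d)⁻¹ *
          (Real.sqrt (a d + ∑ k ∈ Finset.Icc 1 (d - q), (2 : ℝ) ^ (k - 1) * a (d - k))
            - Real.sqrt ((2 : ℝ) ^ (d - q) * a (q - 1))) ^ 2 := by
  have h0 : 0 ∉ Icc 1 (d - q) := by simp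
  have h1 : 1 ∈ insert 0 (Icc 1 (d - q)) := mem_insert_of_mem (mem_Icc.mpr ⟨le_rfl, by omega⟩)
  have hne : a (d - 0) ≠ a (d - 1) := (hmono (d - 1) d (by omega) le_rfl).ne'
  -- index `0` carries `a d`, with weight `2 ^ (0 - 1) = 1` by truncated subtraction
  have key := sqrt_sum_mul_sub_sqrt_sq_lt_sum_mul_sqrt_sub_sq (w := fun k => (2 : ℝ) ^ (k - 1))
    (b := fun k => a (d - k)) (fun _ _ => by positivity)
    (fun k _ => (hpos _ (Nat.sub_le d k)).le) (mem_insert_self 0 _) h1 hne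
    (hpos (q - 1) (by omega))
  have hW : ∑ k ∈ insert 0 (Icc 1 (d - q)), (2 : ℝ) ^ (k - 1) = 2 ^ (d - q) := by
    rw [sum_insert h0, Nat.zero_sub, pow_zero, one_add_sum_Icc_two_pow_pred]
  rw [hW, sum_insert h0, sum_insert h0] at key
  simp only [Nat.zero_sub, pow_zero, one_mul, Nat.sub_zero] at key
  exact mul_lt_mul_of_pos_left key (by positivity)

/-- Bottom-up beats top-down: under assortativity `a 0 < a 1 < ⋯ < a d` (positive reals)
and `1 ≤ q ≤ d - 1`, we have `J_q^{bu} > J_q^{td}`. -/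
theorem stmt1 (d q : ℕ) (a : ℕ → ℝ)
    (hq : 1 ≤ q) (hqd : q ≤ d - 1) (hd : 2 ≤ d)
    (hpos : ∀ k, k ≤ d → 0 < a k)
    (hmono : ∀ i j, i < j → j ≤ d → a i < a j) :
    ((2 : ℝ) ^ d)⁻¹ *
        ((Real.sqrt (a (q - 1)) - Real.sqrt (a d)) ^ 2
          + ∑ k ∈ Finset.Icc 1 (d - q),
              (2 : ℝ) ^ (k - 1) * (Real.sqrt (a (q - 1)) - Real.sqrt (a (d - k))) ^ 2)
      > ((2 : ℝ) ^ d)⁻¹ *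
          (Real.sqrt (a d + ∑ k ∈ Finset.Icc 1 (d - q), (2 : ℝ) ^ (k - 1) * a (d - k))
            - Real.sqrt ((2 : ℝ) ^ (d - q) * a (q - 1))) ^ 2 :=
  stmt1_general d q a hq hqd hpos hmono
end

section
/- Let $0 < p_{q-1} < p_q < \cdots < p_d < 1$ (assortativity) and define $H_s = \frac{1}{K}\left(D_{1/2}(p_s, p_d) + \sum_{k=1}^{d-s-1} 2^{k-1} D_{1/2}(p_s, p_{d-k})\right)$ for $0 \le s \le d-1$, where $D_{1/2}(p,q) = -2\log(\sqrt{(1-p)(1-q)} + \sqrt{pq})$ and $K = 2^d$. Then $s \mapsto H_s$ is strictly decreasing on $\{0, 1, \ldots, d-1\}$, and hence $\min_{0 \le s \le q-1} H_s = H_{q-1}$. -/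
open Finset Real

/-! The Bhattacharyya coefficient `√((1-p)(1-r)) + √(p r)` of `Ber p` and `Ber r` is at most `1`
(Cauchy–Schwarz) and strictly increasing in `p` on `[0, r]` (for `p = sin² α`, `r = sin² β` it
is `cos (α - β)`), so `D_{1/2}(Ber p, Ber r)` is nonnegative and strictly decreasing in `p` on
`(0, r]`.
Passing from `s` to `t > s` replaces `p s` by the larger `p t` in every summand that `H t` keeps,
lowering each of them, while the summands that `H t` drops are nonnegative. -/

noncomputable def bhattacharyyaBer (p r : ℝ) : ℝ := √((1 - p) * (1 - r)) + √(p * r)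

noncomputable def renyiHalfBer (p r : ℝ) : ℝ := -2 * log (bhattacharyyaBer p r)

noncomputable def chernoffHellinger (p : ℕ → ℝ) (d s : ℕ) : ℝ :=
  (1 / (2 : ℝ) ^ d) * (renyiHalfBer (p s) (p d) +
    ∑ k ∈ Icc 1 (d - s - 1), (2 : ℝ) ^ (k - 1) * renyiHalfBer (p s) (p (d - k)))

lemma bhattacharyyaBer_le_one {p r : ℝ} (hp0 : 0 ≤ p) (hp1 : p ≤ 1) (hr0 : 0 ≤ r) (hr1 : r ≤ 1) :
    bhattacharyyaBer p r ≤ 1 := by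
  rw [bhattacharyyaBer, sqrt_mul (by linarith), sqrt_mul hp0]
  have hu := sq_sqrt (sub_nonneg.mpr hp1)
  have hv := sq_sqrt hp0
  have hx := sq_sqrt (sub_nonneg.mpr hr1)
  have hy := sq_sqrt hr0
  -- Cauchy–Schwarz for the unit vectors `(√(1-p), √p)` and `(√(1-r), √r)`
  nlinarith [sq_nonneg (√(1 - p) * √r - √p * √(1 - r)), sqrt_nonneg (1 - p), sqrt_nonneg p,
    sqrt_nonneg (1 - r), sqrt_nonneg r]

lemma renyiHalfBer_nonneg {p r : ℝ} (hp0 : 0 ≤ p) (hp1 : p ≤ 1) (hr0 : 0 ≤ r) (hr1 : r ≤ 1) :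
    0 ≤ renyiHalfBer p r := by
  have := log_nonpos (by unfold bhattacharyyaBer; positivity)
    (bhattacharyyaBer_le_one hp0 hp1 hr0 hr1)
  unfold renyiHalfBer
  linarith

lemma bhattacharyyaBer_strictMonoOn {r : ℝ} (hr : r ≤ 1) :
    StrictMonoOn (fun p ↦ bhattacharyyaBer p r) (Set.Icc 0 r) := by
  rintro a ⟨ha0, -⟩ b ⟨hb0, hbr⟩ hab
  simp only [bhattacharyyaBer]
  have har : a < r := hab.trans_le hbr
  rw [sqrt_mul (show 0 ≤ 1 - a by linarith), sqrt_mul (show 0 ≤ 1 - b by linarith), sqrt_mul ha0,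
    sqrt_mul hb0]
  have cross_a : √(1 - r) * √a < √r * √(1 - a) := by
    rw [← sqrt_mul (by linarith), ← sqrt_mul (by linarith)]
    exact sqrt_lt_sqrt (by nlinarith) (by nlinarith)
  have cross_b : √(1 - r) * √b ≤ √r * √(1 - b) := by
    rw [← sqrt_mul (by linarith), ← sqrt_mul (by linarith)]
    exact sqrt_le_sqrt (by nlinarith)
  have hsa := sq_sqrt ha0
  have hsb := sq_sqrt hb0
  have hta := sq_sqrt (show 0 ≤ 1 - a by linarith)
  have htb := sq_sqrt (show 0 ≤ 1 - b by linarith)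
  have hP : 0 < (√a + √b) * (√(1 - a) + √(1 - b)) := by
    have := sqrt_pos.mpr (show 0 < 1 - a by linarith)
    have := sqrt_pos.mpr (ha0.trans_lt hab)
    positivity
  -- `√(1-a) - √(1-b)` and `√b - √a` both equal `b - a` divided by the matching factor of `hP`
  have key : √(1 - r) * (√(1 - a) - √(1 - b)) * ((√a + √b) * (√(1 - a) + √(1 - b)))
      < √r * (√b - √a) * ((√a + √b) * (√(1 - a) + √(1 - b))) := calc
    _ = √(1 - r) * (√a + √b) * (b - a) := by
      linear_combination √(1 - r) * (√a + √b) * (hta - htb)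
    _ < √r * (√(1 - a) + √(1 - b)) * (b - a) :=
      mul_lt_mul_of_pos_right (by linarith) (sub_pos.mpr hab)
    _ = _ := by linear_combination √r * (√(1 - a) + √(1 - b)) * (hsa - hsb)
  linarith [lt_of_mul_lt_mul_right key hP.le]

lemma renyiHalfBer_strictAntiOn {r : ℝ} (hr : r ≤ 1) :
    StrictAntiOn (fun p ↦ renyiHalfBer p r) (Set.Ioc 0 r) := by
  rintro a ⟨ha0, har⟩ b ⟨hb0, hbr⟩ hab
  have hpos : 0 < bhattacharyyaBer a r := by
    unfold bhattacharyyaBer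
    have := sqrt_pos.mpr (mul_pos ha0 (ha0.trans_le har))
    positivity
  have := log_lt_log hpos
    (bhattacharyyaBer_strictMonoOn hr ⟨ha0.le, har⟩ ⟨hb0.le, hbr⟩ hab)
  simp only [renyiHalfBer]
  linarith

lemma chernoffHellinger_strictAntiOn {p : ℕ → ℝ} {d : ℕ} (hp : StrictMonoOn p (Set.Iic d))
    (hp0 : 0 < p 0) (hpd : p d ≤ 1) : StrictAntiOn (chernoffHellinger p d) (Set.Iio d) := by
  have mem_Ioc {i j : ℕ} (hij : i < j) (hj : j ≤ d) : p i ∈ Set.Ioc 0 (p j) :=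
    ⟨hp0.trans_le (hp.monotoneOn (Nat.zero_le d) (hij.le.trans hj) (Nat.zero_le i)),
      (hp (hij.le.trans hj) hj hij).le⟩
  have le_one {i : ℕ} (hi : i ≤ d) : p i ≤ 1 :=
    (hp.monotoneOn hi (Set.mem_Iic.2 le_rfl) hi).trans hpd
  intro s _ t ht hst
  have ht' : t < d := ht
  have hps : p s ∈ Set.Ioc 0 (p t) := mem_Ioc hst ht'.le
  have hpst : p s < p t := hp (hst.trans ht').le ht'.le hst
  have head : renyiHalfBer (p t) (p d) < renyiHalfBer (p s) (p d) :=
    renyiHalfBer_strictAntiOn hpd (Set.Ioc_subset_Ioc_right (mem_Ioc ht' le_rfl).2 hps)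
      (mem_Ioc ht' le_rfl) hpst
  have shift : ∑ k ∈ Icc 1 (d - t - 1), (2 : ℝ) ^ (k - 1) * renyiHalfBer (p t) (p (d - k))
      ≤ ∑ k ∈ Icc 1 (d - t - 1), (2 : ℝ) ^ (k - 1) * renyiHalfBer (p s) (p (d - k)) := by
    refine sum_le_sum fun k hk ↦ mul_le_mul_of_nonneg_left ?_ (by positivity)
    have htk : t < d - k := by grind
    exact (renyiHalfBer_strictAntiOn (le_one (Nat.sub_le d k))
      (Set.Ioc_subset_Ioc_right (mem_Ioc htk (Nat.sub_le d k)).2 hps)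
      (mem_Ioc htk (Nat.sub_le d k)) hpst).le
  have extend : ∑ k ∈ Icc 1 (d - t - 1), (2 : ℝ) ^ (k - 1) * renyiHalfBer (p s) (p (d - k))
      ≤ ∑ k ∈ Icc 1 (d - s - 1), (2 : ℝ) ^ (k - 1) * renyiHalfBer (p s) (p (d - k)) := by
    refine sum_le_sum_of_subset_of_nonneg (Icc_subset_Icc_right (by omega)) fun k _ _ ↦ ?_
    exact mul_nonneg (by positivity) (renyiHalfBer_nonneg hps.1.le (le_one (by omega))
      (hp0.le.trans (hp.monotoneOn (Nat.zero_le d) (Nat.sub_le d k) (Nat.zero_le _)))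
      (le_one (Nat.sub_le d k)))
  exact mul_lt_mul_of_pos_left (add_lt_add_of_lt_of_le head (shift.trans extend)) (by positivity)

lemma Finset.inf'_Icc_eq_right_of_antitoneOn {α β : Type*} [Preorder α] [LocallyFiniteOrder α]
    [SemilatticeInf β] {f : α → β} {a b : α} (hf : AntitoneOn f (Set.Icc a b))
    (h : (Icc a b).Nonempty) : (Icc a b).inf' h f = f b := by
  have hab := nonempty_Icc.1 h
  refine le_antisymm (inf'_le f (right_mem_Icc.2 hab)) (le_inf' h _ fun x hx ↦ ?_)
  rw [mem_Icc] at hx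
  exact hf hx (Set.right_mem_Icc.2 hab) hx.2

theorem stmt7_general (d : ℕ) (p : ℕ → ℝ)
    (hpos : 0 < p 0) (hlt1 : p d < 1)
    (hmono : ∀ i j, i < j → j ≤ d → p i < p j)
    (H : ℕ → ℝ)
    (hH : ∀ s, H s = (1 / (2 : ℝ) ^ d) *
      ((-2 * Real.log (Real.sqrt ((1 - p s) * (1 - p d)) + Real.sqrt (p s * p d)))
        + ∑ k ∈ Finset.Icc 1 (d - s - 1), (2 : ℝ) ^ (k - 1) *
            (-2 * Real.log (Real.sqrt ((1 - p s) * (1 - p (d - k)))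
              + Real.sqrt (p s * p (d - k)))))) :
    (∀ s t : ℕ, s < t → t ≤ d - 1 → H t < H s) ∧
    ∀ q : ℕ, 1 ≤ q → q ≤ d →
      (Finset.Icc 0 (q - 1)).inf' (Finset.nonempty_Icc.mpr (Nat.zero_le _)) H = H (q - 1) := by
  obtain rfl : H = chernoffHellinger p d := funext hH
  have anti : StrictAntiOn (chernoffHellinger p d) (Set.Iio d) :=
    chernoffHellinger_strictAntiOn (fun i hi j hj hij ↦ hmono i j hij hj) hpos hlt1.le
  refine ⟨fun s t hst ht ↦ anti (show s < d by omega) (show t < d by omega) hst,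
    fun q hq hqd ↦ inf'_Icc_eq_right_of_antitoneOn
      (anti.antitoneOn.mono fun x hx ↦ show x < d by grind) _⟩

/-- For an assortative balanced BTSBM, the Chernoff–Hellinger divergence
`H s = (1/K)(D_{1/2}(p s, p d) + ∑_{k=1}^{d-s-1} 2^{k-1} D_{1/2}(p s, p (d-k)))`
is strictly decreasing in `s` on `{0, …, d-1}`, and hence for every `1 ≤ q ≤ d`,
`min_{0 ≤ s ≤ q-1} H s = H (q-1)`. -/
theorem stmt7 (d : ℕ) (hd : 1 ≤ d) (p : ℕ → ℝ)
    (hpos : 0 < p 0) (hlt1 : p d < 1)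
    (hmono : ∀ i j, i < j → j ≤ d → p i < p j)
    (H : ℕ → ℝ)
    (hH : ∀ s, H s = (1 / (2 : ℝ) ^ d) *
      ((-2 * Real.log (Real.sqrt ((1 - p s) * (1 - p d)) + Real.sqrt (p s * p d)))
        + ∑ k ∈ Finset.Icc 1 (d - s - 1), (2 : ℝ) ^ (k - 1) *
            (-2 * Real.log (Real.sqrt ((1 - p s) * (1 - p (d - k)))
              + Real.sqrt (p s * p (d - k)))))) :
    (∀ s t : ℕ, s < t → t ≤ d - 1 → H t < H s) ∧
    ∀ q : ℕ, 1 ≤ q → q ≤ d →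
      (Finset.Icc 0 (q - 1)).inf' (Finset.nonempty_Icc.mpr (Nat.zero_le _)) H = H (q - 1) :=
  stmt7_general d p hpos hlt1 hmono H hH
end
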